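/- Consider an IDV social choice setting in which every valuation v_i is decomposable and continuous in its own signal s_i, and let f : S → Δ(𝒜) be a finite-valued randomized social choice function, i.e., for every agent i and every s_{-i}, the set {f(s_i, s_{-i}) : s_i ∈ S_i} ⊆ Δ(𝒜) is finite. Then f is implementable with ex-post incentive compatible payments if and only if f satisfies weak monotonicity (W-Mon). -/

import Mathlib

/-!
Since `hᵢ` and `gᵢ` do not depend on agent `i`'s own signal, along that signal she is a
single-parameter agent: her type is `v̂ᵢ`, her allocation is `⟨hᵢ, f⟩`, and `⟨gᵢ, f⟩` is a
constant she cannot influence through her type. W-Mon says precisely that a strictly higher type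
gets a weakly higher allocation, and then Myerson's payment (`⟨gᵢ, f⟩` plus type times allocation
minus the information rent, the integral of the allocation up to the type) is incentive compatible.
Types may tie, so the rent integrates the supremum of the allocations of strictly lower types,
which is monotone, and bounded because `f` is a distribution.
Conversely, adding the two incentive constraints between two signals gives W-Mon.
-/

open Finset

noncomputable section

/-- The signal profile lies in the signal space `[0,1]^n`. -/
def InSig {n : ℕ} (s : Fin n → ℝ) : Prop := ∀ i, s i ∈ Set.Icc (0 : ℝ) 1

/-- Expected value `⟨u, d⟩ = ∑ a, d a · u a` of the vector `u` under the distribution `d`. -/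
def expVal {A : Type*} [Fintype A] (u d : A → ℝ) : ℝ := ∑ a, d a * u a

variable {n : ℕ} {A : Type*} [Fintype A]

/-- Valuations are nonnegative and nondecreasing in every signal coordinate. -/
def ValidVals (v : Fin n → A → (Fin n → ℝ) → ℝ) : Prop :=
  (∀ i a (s : Fin n → ℝ), InSig s → 0 ≤ v i a s) ∧
  (∀ i a (j : Fin n) (s : Fin n → ℝ), InSig s → ∀ t t' : ℝ, t ∈ Set.Icc (0 : ℝ) 1 →
    t' ∈ Set.Icc (0 : ℝ) 1 → t ≤ t' →
    v i a (Function.update s j t) ≤ v i a (Function.update s j t'))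

/-- `f` maps every signal profile to a probability distribution over the alternatives. -/
def IsDistr (f : (Fin n → ℝ) → A → ℝ) : Prop :=
  ∀ s : Fin n → ℝ, InSig s → (∀ a, 0 ≤ f s a) ∧ ∑ a, f s a = 1

/-- `v i` is decomposable: `v i a s = v̂ i s * h a s₋ᵢ + g a s₋ᵢ` with `v̂, h ≥ 0`, where
`h` and `g` depend only on the signals of the agents other than `i`. -/
def Decomposable (v : Fin n → A → (Fin n → ℝ) → ℝ) : Prop :=
  ∀ i, ∃ (vh : (Fin n → ℝ) → ℝ) (h g : A → (Fin n → ℝ) → ℝ),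
    (∀ s : Fin n → ℝ, InSig s → 0 ≤ vh s) ∧
    (∀ a (s : Fin n → ℝ), InSig s → 0 ≤ h a s) ∧
    (∀ a (s : Fin n → ℝ), InSig s → ∀ t ∈ Set.Icc (0 : ℝ) 1,
      h a (Function.update s i t) = h a s) ∧
    (∀ a (s : Fin n → ℝ), InSig s → ∀ t ∈ Set.Icc (0 : ℝ) 1,
      g a (Function.update s i t) = g a s) ∧
    (∀ a (s : Fin n → ℝ), InSig s → v i a s = vh s * h a s + g a s)

/-- The payments `p` make `f` ex-post incentive compatible. -/
def ExPostIC (v : Fin n → A → (Fin n → ℝ) → ℝ) (f : (Fin n → ℝ) → A → ℝ)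
    (p : Fin n → (Fin n → ℝ) → ℝ) : Prop :=
  ∀ i (s : Fin n → ℝ), InSig s → ∀ b ∈ Set.Icc (0 : ℝ) 1,
    expVal (fun a => v i a s) (f s) - p i s ≥
      expVal (fun a => v i a s) (f (Function.update s i b)) - p i (Function.update s i b)

/-- `f` satisfies weak monotonicity (W-Mon):
`⟨vᵢ(z, s₋ᵢ) − vᵢ(s), f(z, s₋ᵢ) − f(s)⟩ ≥ 0`. -/
def WMon (v : Fin n → A → (Fin n → ℝ) → ℝ) (f : (Fin n → ℝ) → A → ℝ) : Prop :=
  ∀ i (s : Fin n → ℝ), InSig s → ∀ z ∈ Set.Icc (0 : ℝ) 1,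
    expVal (fun a => v i a (Function.update s i z) - v i a s)
      (fun a => f (Function.update s i z) a - f s a) ≥ 0

/-- Each valuation is continuous in the agent's own signal. -/
def ContinuousOwn (v : Fin n → A → (Fin n → ℝ) → ℝ) : Prop :=
  ∀ i a (s : Fin n → ℝ), InSig s →
    ContinuousOn (fun t => v i a (Function.update s i t)) (Set.Icc (0 : ℝ) 1)

/-- `f` is finite-valued: for every agent `i` and every `s₋ᵢ`, the set of distributions
`{f(sᵢ, s₋ᵢ) : sᵢ ∈ Sᵢ}` is finite. -/
def FiniteValued (f : (Fin n → ℝ) → A → ℝ) : Prop :=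
  ∀ i (s : Fin n → ℝ), InSig s →
    Set.Finite ((fun t => f (Function.update s i t)) '' Set.Icc (0 : ℝ) 1)

open intervalIntegral Function

lemma InSig.update {s : Fin n → ℝ} (hs : InSig s) (i : Fin n) {t : ℝ}
    (ht : t ∈ Set.Icc (0 : ℝ) 1) : InSig (update s i t) := by
  intro j
  rcases eq_or_ne j i with rfl | hj
  · simpa using ht
  · simpa [update_of_ne hj] using hs j

lemma expVal_eq_dotProduct (u d : A → ℝ) : expVal u d = d ⬝ᵥ u := rfl

lemma expVal_sub_sub (u u' d d' : A → ℝ) :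
    expVal (fun a => u' a - u a) (fun a => d' a - d a) =
      expVal u' d' - expVal u' d - (expVal u d' - expVal u d) := by
  simp only [expVal_eq_dotProduct, ← Pi.sub_def, dotProduct_sub, sub_dotProduct]

lemma expVal_affine (c : ℝ) (h g d : A → ℝ) :
    expVal (fun a => c * h a + g a) d = c * expVal h d + expVal g d := by
  simp only [expVal, mul_add, sum_add_distrib, mul_sum]
  exact congrArg (· + _) (sum_congr rfl fun a _ => by ring)

lemma expVal_nonneg {u d : A → ℝ} (hu : ∀ a, 0 ≤ u a) (hd : ∀ a, 0 ≤ d a) :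
    0 ≤ expVal u d :=
  sum_nonneg fun a _ => mul_nonneg (hd a) (hu a)

lemma expVal_le_sum {u d : A → ℝ} (hu : ∀ a, 0 ≤ u a) (hd : ∀ a, 0 ≤ d a)
    (hd1 : ∑ a, d a = 1) : expVal u d ≤ ∑ a, u a := by
  refine sum_le_sum fun a _ => mul_le_of_le_one_left (hu a) ?_
  exact hd1 ▸ single_le_sum (fun b _ => hd b) (mem_univ a)

lemma sub_mul_le_integral_of_monotone {φ : ℝ → ℝ} (hφ : Monotone φ) {a c : ℝ}
    (hle : ∀ y ≤ a, φ y ≤ c) (hge : ∀ y, a < y → c ≤ φ y) (x : ℝ) :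
    (x - a) * c ≤ ∫ y in a..x, φ y := by
  have hconst : ∀ b b' : ℝ, ∫ _ in b..b', c = (b' - b) * c := fun b b' => by
    simp [integral_const]
  rcases le_total a x with hax | hxa
  · rw [← hconst]
    exact integral_mono_on_of_le_Ioo hax intervalIntegrable_const hφ.intervalIntegrable
      fun y hy => hge y hy.1
  · have : ∫ y in x..a, φ y ≤ (a - x) * c := hconst x a ▸
      integral_mono_on_of_le_Ioo hxa hφ.intervalIntegrable intervalIntegrable_const
        fun y hy => hle y hy.2.le
    rw [integral_symm]
    linarith

section Rent

variable {ι : Type*} (S : Set ι) (V H : ι → ℝ)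

def allocBelow (x : ℝ) : ℝ := sSup (insert 0 (H '' {u ∈ S | V u < x}))

def rent (x : ℝ) : ℝ := ∫ y in 0..x, allocBelow S V H y

variable {S V H}

lemma bddAbove_insert_image_sep (hbdd : BddAbove (H '' S)) (x : ℝ) :
    BddAbove (insert 0 (H '' {u ∈ S | V u < x})) :=
  (hbdd.mono (Set.image_mono (Set.sep_subset _ _))).insert 0

lemma monotone_allocBelow (hbdd : BddAbove (H '' S)) : Monotone (allocBelow S V H) :=
  fun _ x' hx => csSup_le_csSup (bddAbove_insert_image_sep hbdd x') (Set.insert_nonempty _ _)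
    (Set.insert_subset_insert (Set.image_mono fun _ hu => ⟨hu.1, hu.2.trans_le hx⟩))

lemma allocBelow_le (hmono : ∀ u ∈ S, ∀ u' ∈ S, V u < V u' → H u ≤ H u')
    {b : ι} (hb : b ∈ S) (hb0 : 0 ≤ H b) {y : ℝ} (hy : y ≤ V b) :
    allocBelow S V H y ≤ H b := by
  refine csSup_le (Set.insert_nonempty _ _) ?_
  rintro _ (rfl | ⟨u, ⟨hu, hlt⟩, rfl⟩)
  exacts [hb0, hmono u hu b hb (hlt.trans_le hy)]

lemma le_allocBelow (hbdd : BddAbove (H '' S)) {b : ι} (hb : b ∈ S) {y : ℝ} (hy : V b < y) :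
    H b ≤ allocBelow S V H y :=
  le_csSup (bddAbove_insert_image_sep hbdd y) (Set.mem_insert_of_mem _ ⟨b, ⟨hb, hy⟩, rfl⟩)

/-- Myerson's lemma: with the payment `V b * H b - rent (V b)`, a type of value `x` gains nothing
by reporting `b`. -/
theorem sub_mul_le_rent_sub_rent (hmono : ∀ u ∈ S, ∀ u' ∈ S, V u < V u' → H u ≤ H u')
    (hbdd : BddAbove (H '' S)) {b : ι} (hb : b ∈ S) (hb0 : 0 ≤ H b) (x : ℝ) :
    (x - V b) * H b ≤ rent S V H x - rent S V H (V b) := by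
  have hint : ∀ c d : ℝ, IntervalIntegrable (allocBelow S V H) MeasureTheory.volume c d :=
    fun _ _ => (monotone_allocBelow hbdd).intervalIntegrable
  rw [rent, rent, integral_interval_sub_left (hint _ _) (hint _ _)]
  exact sub_mul_le_integral_of_monotone (monotone_allocBelow hbdd)
    (fun _ => allocBelow_le hmono hb hb0) (fun _ => le_allocBelow hbdd hb) x

end Rent

section Decomposable

variable (f : (Fin n → ℝ) → A → ℝ) (i : Fin n) (vh : (Fin n → ℝ) → ℝ)
  (h g : A → (Fin n → ℝ) → ℝ)

def ownSignalRent (s : Fin n → ℝ) : ℝ → ℝ :=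
  rent (Set.Icc 0 1) (fun u => vh (update s i u))
    (fun u => expVal (fun a => h a (update s i u)) (f (update s i u)))

def decompPayment (s : Fin n → ℝ) : ℝ :=
  expVal (fun a => g a s) (f s) + vh s * expVal (fun a => h a s) (f s) -
    ownSignalRent f i vh h s (vh s)

lemma ownSignalRent_update (s : Fin n → ℝ) (b : ℝ) :
    ownSignalRent f i vh h (update s i b) = ownSignalRent f i vh h s := by
  simp only [ownSignalRent, update_idem]

variable {f i vh h g}

lemma expVal_update_of_decomp {v : Fin n → A → (Fin n → ℝ) → ℝ}
    (hv : ∀ a s, InSig s → v i a s = vh s * h a s + g a s)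
    (hh : ∀ a s, InSig s → ∀ t ∈ Set.Icc (0 : ℝ) 1, h a (update s i t) = h a s)
    (hg : ∀ a s, InSig s → ∀ t ∈ Set.Icc (0 : ℝ) 1, g a (update s i t) = g a s)
    {s : Fin n → ℝ} (hs : InSig s) {t : ℝ} (ht : t ∈ Set.Icc (0 : ℝ) 1) (d : A → ℝ) :
    expVal (fun a => v i a (update s i t)) d =
      vh (update s i t) * expVal (fun a => h a s) d + expVal (fun a => g a s) d := by
  rw [← expVal_affine]
  congr 1
  funext a
  rw [hv a _ (hs.update i ht), hh a s hs t ht, hg a s hs t ht]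

lemma expVal_mono_of_wMon {v : Fin n → A → (Fin n → ℝ) → ℝ} (hW : WMon v f)
    (hv : ∀ a s, InSig s → v i a s = vh s * h a s + g a s)
    (hh : ∀ a s, InSig s → ∀ t ∈ Set.Icc (0 : ℝ) 1, h a (update s i t) = h a s)
    (hg : ∀ a s, InSig s → ∀ t ∈ Set.Icc (0 : ℝ) 1, g a (update s i t) = g a s)
    {s : Fin n → ℝ} (hs : InSig s) {u u' : ℝ} (hu : u ∈ Set.Icc (0 : ℝ) 1)
    (hu' : u' ∈ Set.Icc (0 : ℝ) 1) (hlt : vh (update s i u) < vh (update s i u')) :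
    expVal (fun a => h a s) (f (update s i u)) ≤ expVal (fun a => h a s) (f (update s i u')) := by
  have hwm := hW i (update s i u) (hs.update i hu) u' hu'
  rw [update_idem, expVal_sub_sub, expVal_update_of_decomp hv hh hg hs hu',
    expVal_update_of_decomp hv hh hg hs hu', expVal_update_of_decomp hv hh hg hs hu,
    expVal_update_of_decomp hv hh hg hs hu] at hwm
  have hprod : 0 ≤ (vh (update s i u') - vh (update s i u)) *
      (expVal (fun a => h a s) (f (update s i u')) -
        expVal (fun a => h a s) (f (update s i u))) := by
    linarith
  exact sub_nonneg.1 (nonneg_of_mul_nonneg_right hprod (sub_pos.2 hlt))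

theorem decompPayment_ic {v : Fin n → A → (Fin n → ℝ) → ℝ} (hf : IsDistr f) (hW : WMon v f)
    (hv : ∀ a s, InSig s → v i a s = vh s * h a s + g a s)
    (hh0 : ∀ a s, InSig s → 0 ≤ h a s)
    (hh : ∀ a s, InSig s → ∀ t ∈ Set.Icc (0 : ℝ) 1, h a (update s i t) = h a s)
    (hg : ∀ a s, InSig s → ∀ t ∈ Set.Icc (0 : ℝ) 1, g a (update s i t) = g a s)
    {s : Fin n → ℝ} (hs : InSig s) {b : ℝ} (hb : b ∈ Set.Icc (0 : ℝ) 1) :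
    expVal (fun a => v i a s) (f (update s i b)) - decompPayment f i vh h g (update s i b) ≤
      expVal (fun a => v i a s) (f s) - decompPayment f i vh h g s := by
  have hline : ∀ u ∈ Set.Icc (0 : ℝ) 1, (fun a => h a (update s i u)) = fun a => h a s :=
    fun u hu => funext fun a => hh a s hs u hu
  have hmono : ∀ u ∈ Set.Icc (0 : ℝ) 1, ∀ u' ∈ Set.Icc (0 : ℝ) 1,
      vh (update s i u) < vh (update s i u') →
      expVal (fun a => h a (update s i u)) (f (update s i u)) ≤
        expVal (fun a => h a (update s i u')) (f (update s i u')) := fun u hu u' hu' hlt => by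
    rw [hline u hu, hline u' hu']
    exact expVal_mono_of_wMon hW hv hh hg hs hu hu' hlt
  have hbdd : BddAbove ((fun u => expVal (fun a => h a (update s i u)) (f (update s i u))) ''
      Set.Icc 0 1) := by
    refine ⟨∑ a, h a s, ?_⟩
    rintro _ ⟨u, hu, rfl⟩
    have hfu := hf _ (hs.update i hu)
    dsimp only
    rw [hline u hu]
    exact expVal_le_sum (fun a => hh0 a s hs) hfu.1 hfu.2
  have hb0 : 0 ≤ expVal (fun a => h a (update s i b)) (f (update s i b)) :=
    expVal_nonneg (fun a => hh0 a _ (hs.update i hb)) (hf _ (hs.update i hb)).1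
  have hrent : (vh s - vh (update s i b)) * expVal (fun a => h a s) (f (update s i b)) ≤
      ownSignalRent f i vh h s (vh s) - ownSignalRent f i vh h s (vh (update s i b)) :=
    hline b hb ▸ sub_mul_le_rent_sub_rent hmono hbdd hb hb0 (vh s)
  have hval : ∀ d, expVal (fun a => v i a s) d =
      vh s * expVal (fun a => h a s) d + expVal (fun a => g a s) d := fun d => by
    simpa only [update_eq_self] using expVal_update_of_decomp hv hh hg hs (hs i) d
  simp only [decompPayment, ownSignalRent_update, hval, hline b hb,
    funext fun a => hg a s hs b hb]
  linarith

end Decomposable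

lemma wMon_of_exPostIC {v : Fin n → A → (Fin n → ℝ) → ℝ} {f : (Fin n → ℝ) → A → ℝ}
    {p : Fin n → (Fin n → ℝ) → ℝ} (hIC : ExPostIC v f p) : WMon v f := by
  intro i s hs z hz
  have h₁ := hIC i s hs z hz
  have h₂ := hIC i (update s i z) (hs.update i hz) (s i) (hs i)
  rw [update_idem, update_eq_self] at h₂
  rw [expVal_sub_sub]
  linarith

theorem exPostIC_of_wMon {v : Fin n → A → (Fin n → ℝ) → ℝ} {f : (Fin n → ℝ) → A → ℝ}
    (hdec : Decomposable v) (hf : IsDistr f) (hW : WMon v f) :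
    ∃ p, ExPostIC v f p := by
  choose vh h g _ hh0 hh hg hv using hdec
  exact ⟨fun i => decompPayment f i (vh i) (h i) (g i),
    fun i _ hs _ hb => decompPayment_ic hf hW (hv i) (hh0 i) (hh i) (hg i) hs hb⟩

theorem implementable_iff_wmon_of_decomposable_general
    (v : Fin n → A → (Fin n → ℝ) → ℝ)
    (f : (Fin n → ℝ) → A → ℝ)
    (hdec : Decomposable v)
    (hf : IsDistr f) :
    (∃ p : Fin n → (Fin n → ℝ) → ℝ, ExPostIC v f p) ↔ WMon v f :=
  ⟨fun ⟨_, hIC⟩ => wMon_of_exPostIC hIC, exPostIC_of_wMon hdec hf⟩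

/-- With decomposable valuations that are continuous in the agent's own
signal, a finite-valued `f` is implementable with ex-post incentive compatible payments
iff `f` satisfies weak monotonicity (W-Mon). -/
theorem implementable_iff_wmon_of_decomposable
    (v : Fin n → A → (Fin n → ℝ) → ℝ)
    (f : (Fin n → ℝ) → A → ℝ)
    (hv : ValidVals v) (hdec : Decomposable v) (hcont : ContinuousOwn v)
    (hf : IsDistr f) (hfin : FiniteValued f) :
    (∃ p : Fin n → (Fin n → ℝ) → ℝ, ExPostIC v f p) ↔ WMon v f :=
  implementable_iff_wmon_of_decomposable_general v f hdec hf
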